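/- arXiv:1912.11863 — 3 statements merged into one kernel-verified Lean document; each statement's English description precedes it below -/
import Mathlib

section
/- In the setting of the interpolation lemma with interpolants m̃_i defined by linear interpolation of m_i with respect to η^δ_ε (fix δ, ε > 0 with η^δ_ε(T) < ∞, and assume conditions (A1) and (A3)): for every t ∈ [S,T] at which the monotone function η^δ_ε is continuous, m̃_i(t) − m_i(t) → 0 as i → ∞. -/
open Set Metric Filter MeasureTheory
open scoped ENNReal Topology Classical

noncomputable section

/-- Euclidean space `ℝ^n`. -/
abbrev Eucl (n : ℕ) : Type := EuclideanSpace ℝ (Fin n)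

/-- A (strict) partition `a = τ 0 < τ 1 < ⋯ < τ N = b` of the interval `[a,b]`. -/
def IsPartition (a b : ℝ) (N : ℕ) (τ : ℕ → ℝ) : Prop :=
  0 < N ∧ τ 0 = a ∧ τ N = b ∧ ∀ i < N, τ i < τ (i + 1)

/-- The mesh (diameter) of the partition `τ` is at most `ε`. -/
def MeshLE (N : ℕ) (τ : ℕ → ℝ) (ε : ℝ) : Prop :=
  ∀ i < N, τ (i + 1) - τ i ≤ ε

/-- The tube `x̄([s,t]) + δ B` around the arc `x̄` on `[s,t]`. -/
def tube {n : ℕ} (xbar : ℝ → Eucl n) (s t δ : ℝ) : Set (Eucl n) :=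
  {y | ∃ r ∈ Icc s t, dist y (xbar r) ≤ δ}

/-- `I^δ(𝒯) = Σᵢ sup { d_H (F(t_{i+1},x,a), F(t_i,x,a)) : x ∈ x̄([t_i,t_{i+1}]) + δB, a ∈ A }`. -/
def variSum {n k : ℕ} (F : ℝ → Eucl n → Eucl k → Set (Eucl n)) (xbar : ℝ → Eucl n)
    (A : Set (Eucl k)) (δ : ℝ) (N : ℕ) (τ : ℕ → ℝ) : ℝ≥0∞ :=
  ∑ i ∈ Finset.range N,
    ⨆ x ∈ tube xbar (τ i) (τ (i + 1)) δ, ⨆ a ∈ A,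
      EMetric.hausdorffEdist (F (τ (i + 1)) x a) (F (τ i) x a)

/-- `η^δ_ε(t)`: the `(δ,ε)`-perturbed cumulative variation of `F` along `x̄`, uniformly
over `A`, on the base interval `[S,t]`.  (For `t = S` there are no partitions and the
supremum is `0`.) -/
def etaE {n k : ℕ} (F : ℝ → Eucl n → Eucl k → Set (Eucl n)) (xbar : ℝ → Eucl n)
    (A : Set (Eucl k)) (S δ ε t : ℝ) : ℝ≥0∞ :=
  ⨆ (N : ℕ) (τ : ℕ → ℝ) (_ : IsPartition S t N τ) (_ : MeshLE N τ ε),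
    variSum F xbar A δ N τ

/-- `η^δ(t) = lim_{ε ↓ 0} η^δ_ε(t)` (the limit of a monotone family: the infimum). -/
def etaD {n k : ℕ} (F : ℝ → Eucl n → Eucl k → Set (Eucl n)) (xbar : ℝ → Eucl n)
    (A : Set (Eucl k)) (S δ t : ℝ) : ℝ≥0∞ :=
  ⨅ (ε : ℝ) (_ : 0 < ε), etaE F xbar A S δ ε t

/-- `η(t) = lim_{δ ↓ 0} η^δ(t)`: the cumulative variation function of `F` along `x̄`,
uniformly over `A`. -/
def eta {n k : ℕ} (F : ℝ → Eucl n → Eucl k → Set (Eucl n)) (xbar : ℝ → Eucl n)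
    (A : Set (Eucl k)) (S t : ℝ) : ℝ≥0∞ :=
  ⨅ (δ : ℝ) (_ : 0 < δ), etaD F xbar A S δ t

/-- Hypothesis (C1): nonempty closed values, measurability in `t`, and uniform
boundedness `F(t,x,a) ⊆ cB` near the arc. -/
def HypC1 {n k : ℕ} (F : ℝ → Eucl n → Eucl k → Set (Eucl n)) (xbar : ℝ → Eucl n)
    (A : Set (Eucl k)) (S T δbar : ℝ) : Prop :=
  (∀ t x a, (F t x a).Nonempty ∧ IsClosed (F t x a)) ∧
  (∀ (x : Eucl n) (a : Eucl k), ∀ U : Set (Eucl n), IsOpen U →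
     MeasurableSet {t | t ∈ Icc S T ∧ (F t x a ∩ U).Nonempty}) ∧
  (∃ c > (0 : ℝ), ∀ t ∈ Icc S T, ∀ a ∈ A, ∀ x : Eucl n, dist x (xbar t) ≤ δbar →
     F t x a ⊆ closedBall 0 c)

/-- Hypothesis (C2): `F(t,x,a) ⊆ F(t,x',a') + γ(|x-x'| + |a-a'|)B` near the arc, where
`γ` is a modulus of continuity. -/
def HypC2 {n k : ℕ} (F : ℝ → Eucl n → Eucl k → Set (Eucl n)) (xbar : ℝ → Eucl n)
    (A : Set (Eucl k)) (S T δbar : ℝ) (γ : ℝ → ℝ) : Prop :=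
  ContinuousOn γ (Ici 0) ∧ MonotoneOn γ (Ici 0) ∧ γ 0 = 0 ∧ (∀ r ≥ (0 : ℝ), 0 ≤ γ r) ∧
  ∀ t ∈ Icc S T, ∀ x x' : Eucl n, ∀ a ∈ A, ∀ a' ∈ A,
    dist x (xbar t) ≤ δbar → dist x' (xbar t) ≤ δbar →
    ∀ y ∈ F t x a, ∃ z ∈ F t x' a', dist y z ≤ γ (dist x x' + dist a a')

end

noncomputable section

/-- The piecewise-constant function
`m(t) = m₀ + Σ_{j=1}^{N-2} d_j 𝟙_{[τ_j, τ_{j+1})}(t) + d_{N-1} 𝟙_{[τ_{N-1}, T]}(t)`. -/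
def stepFun {n : ℕ} (T : ℝ) (N : ℕ) (τ : ℕ → ℝ) (m0 : Eucl n) (d : ℕ → Eucl n)
    (t : ℝ) : Eucl n :=
  m0 + (∑ j ∈ Finset.Icc 1 (N - 2), Set.indicator (Set.Ico (τ j) (τ (j + 1))) (fun _ => d j) t)
     + Set.indicator (Set.Icc (τ (N - 1)) T) (fun _ => d (N - 1)) t

end


/-!
If `t` lies in the cell `[τ j, τ (j+1))`, then `m̃ t - m t` is a fraction in `[0,1]` (since
`η^δ_ε` is increasing) of the jump of `m` at `τ (j+1)`, and by (A3) that jump is at most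
`η^δ_ε(τ (j+1)) - η^δ_ε(τ (j-1))`. As the mesh tends to `0` both points tend to `t`, so
continuity of `η^δ_ε` at `t` makes the bound vanish. Monotonicity of `η^δ_ε` holds because a
partition of `[S,t₁]` of mesh `≤ ε` extends to one of `[S,t₂]` of mesh `≤ ε`, and the sum
`I^δ` only grows under such an extension.
-/

namespace IsPartition

variable {a b : ℝ} {N : ℕ} {τ : ℕ → ℝ}

theorem strictMonoOn (hp : IsPartition a b N τ) : StrictMonoOn τ (Iic N) :=
  strictMonoOn_Iic_of_lt_succ fun m hm => by simpa using hp.2.2.2 m hm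

theorem monotoneOn (hp : IsPartition a b N τ) : MonotoneOn τ (Iic N) :=
  hp.strictMonoOn.monotoneOn

theorem mem_Icc (hp : IsPartition a b N τ) {l : ℕ} (hl : l ≤ N) : τ l ∈ Icc a b := by
  refine ⟨?_, ?_⟩
  · simpa [hp.2.1] using hp.monotoneOn (Nat.zero_le N) hl (Nat.zero_le l)
  · simpa [hp.2.2.1] using hp.monotoneOn hl self_mem_Iic hl

theorem eq_of_mem_Ico (hp : IsPartition a b N τ) {j l : ℕ} {s : ℝ} (hj : j < N) (hl : l < N)
    (hsj : s ∈ Ico (τ j) (τ (j + 1))) (hsl : s ∈ Ico (τ l) (τ (l + 1))) : j = l := by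
  have no_lt : ∀ p q : ℕ, q < N → s ∈ Ico (τ p) (τ (p + 1)) → s ∈ Ico (τ q) (τ (q + 1)) →
      ¬ p < q := fun p q hq hsp hsq hpq =>
    (hsp.2.trans_le (hp.monotoneOn (show p + 1 ≤ N by omega) hq.le hpq)).not_ge hsq.1
  exact le_antisymm (not_lt.1 (no_lt _ _ hj hsl hsj)) (not_lt.1 (no_lt _ _ hl hsj hsl))

theorem exists_mem_Ico (hp : IsPartition a b N τ) {t : ℝ} (ht : t ∈ Ico a b) :
    ∃ j < N, t ∈ Ico (τ j) (τ (j + 1)) := by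
  have hN : N - 1 + 1 = N := Nat.sub_add_cancel hp.1
  have htN : t < τ (N - 1 + 1) := by rw [hN, hp.2.2.1]; exact ht.2
  have hlast : ∃ j, t < τ (j + 1) := ⟨N - 1, htN⟩
  refine ⟨Nat.find hlast, ?_, ?_, Nat.find_spec hlast⟩
  · have := Nat.find_min' hlast htN
    omega
  · rcases Nat.eq_zero_or_pos (Nat.find hlast) with h0 | hpos
    · rw [h0, hp.2.1]; exact ht.1
    · have := Nat.find_min hlast (Nat.sub_lt hpos one_pos)
      rwa [not_lt, show Nat.find hlast - 1 + 1 = Nat.find hlast by omega] at this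

theorem two_le_of_meshLE (hp : IsPartition a b N τ) {ε : ℝ} (hm : MeshLE N τ ε)
    (hε : ε < b - a) : 2 ≤ N := by
  by_contra! hN
  have hN1 : N = 1 := by have := hp.1; omega
  have := hm 0 (by omega)
  rw [zero_add, ← hN1, hp.2.2.1, hp.2.1] at this
  linarith

theorem pred_le (hp : IsPartition a b N τ) {j : ℕ} (hj : j ≤ N) : τ (j - 1) ≤ τ j :=
  hp.monotoneOn (mem_Iic.2 ((Nat.sub_le j 1).trans hj)) (mem_Iic.2 hj) (Nat.sub_le j 1)

theorem exists_extension (hp : IsPartition a b N τ) {ε : ℝ} (hm : MeshLE N τ ε) {c : ℝ}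
    (hbc : b < c) (hε : 0 < ε) :
    ∃ N' τ', IsPartition a c N' τ' ∧ MeshLE N' τ' ε ∧ N ≤ N' ∧ ∀ j ≤ N, τ' j = τ j := by
  set M := ⌈(c - b) / ε⌉₊
  have hM : (0 : ℝ) < M := by simpa [M] using div_pos (sub_pos.2 hbc) hε
  -- `M` equal steps of length `h ≤ ε` lead from `b` to `c`
  set h := (c - b) / M
  have hh : 0 < h := div_pos (sub_pos.2 hbc) hM
  have hhε : h ≤ ε := by
    rw [div_le_iff₀ hM, mul_comm, ← div_le_iff₀ hε]
    exact Nat.le_ceil _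
  set τ' : ℕ → ℝ := fun j => if j ≤ N then τ j else b + (j - N) * h
  have hlow : ∀ j ≤ N, τ' j = τ j := fun j hj => if_pos hj
  have hhigh : ∀ j ≥ N, τ' j = b + (j - N) * h := by
    intro j hj
    rcases hj.eq_or_lt with rfl | hlt
    · simp [τ', hp.2.2.1]
    · exact if_neg (by omega)
  have hstep : ∀ j, τ' (j + 1) - τ' j = if j < N then τ (j + 1) - τ j else h := by
    intro j
    split_ifs with hj
    · rw [hlow j hj.le, hlow (j + 1) hj]
    · rw [hhigh j (by omega), hhigh (j + 1) (by omega)]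
      push_cast
      ring
  refine ⟨N + M, τ', ⟨by have := hp.1; omega, by rw [hlow 0 (Nat.zero_le N), hp.2.1], ?_,
    fun j _ => ?_⟩, fun j _ => ?_, by omega, hlow⟩
  · rw [hhigh (N + M) (by omega)]
    push_cast
    rw [add_sub_cancel_left, mul_div_cancel₀ _ hM.ne']
    ring
  · have := hstep j
    split_ifs at this with hj
    · linarith [hp.2.2.2 j hj]
    · linarith
  · have := hstep j
    split_ifs at this with hj
    · linarith [hm j hj]
    · linarith

end IsPartition

theorem MeshLE.sub_pred_le {N : ℕ} {τ : ℕ → ℝ} {ε : ℝ} (hm : MeshLE N τ ε) (hε : 0 ≤ ε)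
    {j : ℕ} (hj : j < N) : τ (j + 1) - τ (j - 1) ≤ 2 * ε := by
  have hstep := hm j hj
  rcases Nat.eq_zero_or_pos j with rfl | hpos
  · simp only [zero_add, Nat.zero_sub] at hstep ⊢; linarith
  · have := hm (j - 1) (by omega)
    rw [Nat.sub_add_cancel hpos] at this
    linarith

theorem tendsto_of_mem_Icc_of_meshLE {t : ℝ} {N : ℕ → ℕ} {τ : ℕ → ℕ → ℝ} {j : ℕ → ℕ}
    {u : ℕ → ℝ} (hmesh : ∀ ε > 0, ∀ᶠ i in atTop, MeshLE (N i) (τ i) ε) (hj : ∀ i, j i < N i)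
    (ht : ∀ i, t ∈ Icc (τ i (j i - 1)) (τ i (j i + 1)))
    (hu : ∀ i, u i ∈ Icc (τ i (j i - 1)) (τ i (j i + 1))) :
    Tendsto u atTop (𝓝 t) :=
  Metric.tendsto_nhds.2 fun r hr => (hmesh (r / 3) (by positivity)).mono fun i hi =>
    calc dist (u i) t ≤ τ i (j i + 1) - τ i (j i - 1) := Real.dist_le_of_mem_Icc (hu i) (ht i)
      _ ≤ 2 * (r / 3) := hi.sub_pred_le (by positivity) (hj i)
      _ < r := by linarith

theorem ContinuousWithinAt.tendsto_toReal_comp {α : Type*} [TopologicalSpace α]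
    {H : α → ℝ≥0∞} {s : Set α} {t : α} (hc : ContinuousWithinAt H s t) (ht : H t ≠ ⊤)
    {ι : Type*} {l : Filter ι} {u : ι → α} (hu : Tendsto u l (𝓝 t)) (hus : ∀ i, u i ∈ s) :
    Tendsto (fun i => (H (u i)).toReal) l (𝓝 (H t).toReal) :=
  (ENNReal.tendsto_toReal ht).comp
    (hc.tendsto.comp (tendsto_nhdsWithin_iff.2 ⟨hu, Eventually.of_forall hus⟩))

namespace ENNReal

theorem le_toReal_sub_of_ofReal_le_tsub {x : ℝ} {a b : ℝ≥0∞} (h : ENNReal.ofReal x ≤ b - a)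
    (hab : a ≤ b) (hb : b ≠ ⊤) : x ≤ b.toReal - a.toReal := by
  rw [← ENNReal.toReal_sub_of_le hab hb]
  exact (ENNReal.ofReal_le_iff_le_toReal (ne_top_of_le_ne_top hb tsub_le_self)).1 h

theorem norm_toReal_tsub_div_toReal_tsub_le_one {a x b : ℝ≥0∞} (hxb : x ≤ b) (hb : b ≠ ⊤) :
    ‖(x - a).toReal / (b - a).toReal‖ ≤ 1 := by
  rw [Real.norm_of_nonneg (by positivity)]
  exact div_le_one_of_le₀
    (ENNReal.toReal_mono (ne_top_of_le_ne_top hb tsub_le_self) (tsub_le_tsub_right hxb a))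
    ENNReal.toReal_nonneg

end ENNReal

theorem variSum_le_of_extension {n k : ℕ} (F : ℝ → Eucl n → Eucl k → Set (Eucl n))
    (xbar : ℝ → Eucl n) (A : Set (Eucl k)) (δ : ℝ) {N N' : ℕ} {τ τ' : ℕ → ℝ} (hN : N ≤ N')
    (hτ : ∀ j ≤ N, τ' j = τ j) : variSum F xbar A δ N τ ≤ variSum F xbar A δ N' τ' := by
  unfold variSum
  refine le_of_eq_of_le (Finset.sum_congr rfl fun i hi => ?_)
    (Finset.sum_le_sum_of_subset (Finset.range_subset_range.2 hN))
  rw [Finset.mem_range] at hi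
  rw [hτ i hi.le, hτ (i + 1) hi]

theorem monotone_etaE {n k : ℕ} (F : ℝ → Eucl n → Eucl k → Set (Eucl n)) (xbar : ℝ → Eucl n)
    (A : Set (Eucl k)) (S δ : ℝ) {ε : ℝ} (hε : 0 < ε) : Monotone (etaE F xbar A S δ ε) := by
  intro t₁ t₂ h
  rcases h.eq_or_lt with rfl | hlt
  · exact le_rfl
  refine iSup_le fun N => iSup_le fun τ => iSup₂_le fun hp hm => ?_
  obtain ⟨N', τ', hp', hm', hN, hτ⟩ := hp.exists_extension hm hlt hε
  exact le_iSup_of_le N' <| le_iSup_of_le τ' <| le_iSup₂_of_le hp' hm' <|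
    variSum_le_of_extension F xbar A δ hN hτ

section stepFun

variable {n : ℕ} {S T : ℝ} {N : ℕ} {τ : ℕ → ℝ} (m0 : Eucl n) (d : ℕ → Eucl n)

-- On the cell `[τ 0, τ 1)` the value is `m0` only because `N ≥ 2`: for `N = 1` the last
-- indicator already covers it.
theorem stepFun_eq_of_mem_Ico (hp : IsPartition S T N τ) (hN : 2 ≤ N) {j : ℕ} (hj : j < N)
    {s : ℝ} (hs : s ∈ Ico (τ j) (τ (j + 1))) :
    stepFun T N τ m0 d s = m0 + if j = 0 then 0 else d j := by
  have hcell : ∀ l ∈ Finset.Icc 1 (N - 2),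
      (Ico (τ l) (τ (l + 1))).indicator (fun _ => d l) s = if j = l then d j else 0 := by
    intro l hl
    rw [Finset.mem_Icc] at hl
    split_ifs with hjl
    · subst hjl
      exact indicator_of_mem hs _
    · exact indicator_of_notMem (fun hsl => hjl (hp.eq_of_mem_Ico hj (by omega) hs hsl)) _
  have hlast : (Icc (τ (N - 1)) T).indicator (fun _ => d (N - 1)) s =
      if j = N - 1 then d j else 0 := by
    split_ifs with hjN
    · subst hjN
      have hsT : s ≤ T := by simpa [Nat.sub_add_cancel hp.1, hp.2.2.1] using hs.2.le
      exact indicator_of_mem (mem_Icc.2 ⟨hs.1, hsT⟩) _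
    · refine indicator_of_notMem (fun hsN => ?_) _
      have := hp.monotoneOn (show j + 1 ≤ N by omega) (Nat.sub_le N 1) (by omega)
      linarith [hs.2, hsN.1]
  unfold stepFun
  rw [Finset.sum_congr rfl hcell, Finset.sum_ite_eq, hlast]
  split_ifs with h1 h2 h3 <;> simp only [Finset.mem_Icc] at h1 <;> first | omega | simp

theorem stepFun_right (hp : IsPartition S T N τ) : stepFun T N τ m0 d T = m0 + d (N - 1) := by
  have hcell : ∀ l ∈ Finset.Icc 1 (N - 2),
      (Ico (τ l) (τ (l + 1))).indicator (fun _ => d l) T = 0 := by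
    intro l hl
    rw [Finset.mem_Icc] at hl
    exact indicator_of_notMem (fun hT => hT.2.not_ge (hp.mem_Icc (by omega)).2) _
  unfold stepFun
  rw [Finset.sum_congr rfl hcell, Finset.sum_const_zero, add_zero,
    indicator_of_mem (mem_Icc.2 ⟨(hp.mem_Icc (Nat.sub_le N 1)).2, le_rfl⟩)]

-- `stepFun` is not cumulative: its jump at `τ (j + 1)` is `d (j + 1) - d j` (and `0` at `T`),
-- whence two consecutive increments of `w`.
theorem norm_stepFun_succ_sub_le (hp : IsPartition S T N τ) (hN : 2 ≤ N) {w : ℕ → ℝ}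
    (hw : MonotoneOn w (Iic N)) (hd : ∀ l, 1 ≤ l → l ≤ N → ‖d l‖ ≤ w l - w (l - 1))
    {j : ℕ} (hj : j < N) :
    ‖stepFun T N τ m0 d (τ (j + 1)) - stepFun T N τ m0 d (τ j)‖ ≤ w (j + 1) - w (j - 1) := by
  have hcell : ∀ l < N, stepFun T N τ m0 d (τ l) = m0 + if l = 0 then 0 else d l := fun l hl =>
    stepFun_eq_of_mem_Ico m0 d hp hN hl ⟨le_rfl, hp.strictMonoOn (mem_Iic.2 (by omega))
      (mem_Iic.2 (by omega)) (Nat.lt_succ_self l)⟩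
  have hbound : ∀ l ≤ N, ‖if l = 0 then 0 else d l‖ ≤ w l - w (l - 1) := by
    intro l hl
    split_ifs with h0
    · simp [h0]
    · exact hd l (by omega) hl
  rw [hcell j hj]
  rcases (show j + 1 ≤ N from hj).lt_or_eq with hj1 | hj1
  · rw [hcell (j + 1) hj1, add_sub_add_left_eq_sub]
    have h1 := hbound (j + 1) hj1.le
    have h2 := hbound j hj.le
    rw [Nat.add_sub_cancel] at h1
    linarith [norm_sub_le (if j + 1 = 0 then 0 else d (j + 1)) (if j = 0 then 0 else d j)]
  · have hj' : j = N - 1 := by omega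
    rw [hj1, hp.2.2.1, stepFun_right m0 d hp, if_neg (by omega), ← hj', sub_self, norm_zero,
      sub_nonneg]
    exact hw (mem_Iic.2 (by omega)) (mem_Iic.2 (by omega)) (by omega)

theorem norm_interpolant_sub_stepFun_le {H : ℝ → ℝ≥0∞} (hH : Monotone H) (hHT : H T ≠ ⊤)
    (hp : IsPartition S T N τ) (hN : 2 ≤ N)
    (hd : ∀ l, 1 ≤ l → l ≤ N → ENNReal.ofReal ‖d l‖ ≤ H (τ l) - H (τ (l - 1)))
    {j : ℕ} (hj : j < N) {t : ℝ} (ht : t ∈ Ico (τ j) (τ (j + 1))) :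
    ‖stepFun T N τ m0 d (τ j) + ((H t - H (τ j)).toReal / (H (τ (j + 1)) - H (τ j)).toReal) •
        (stepFun T N τ m0 d (τ (j + 1)) - stepFun T N τ m0 d (τ j)) - stepFun T N τ m0 d t‖ ≤
      (H (τ (j + 1))).toReal - (H (τ (j - 1))).toReal := by
  have hfin : ∀ l ≤ N, H (τ l) ≠ ⊤ := fun l hl => ne_top_of_le_ne_top hHT (hH (hp.mem_Icc hl).2)
  have hHτ : MonotoneOn (fun l => H (τ l)) (Iic N) := fun l hl l' hl' hll' =>
    hH (hp.monotoneOn hl hl' hll')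
  have hw : MonotoneOn (fun l => (H (τ l)).toReal) (Iic N) := fun l hl l' hl' hll' =>
    ENNReal.toReal_mono (hfin l' hl') (hHτ hl hl' hll')
  have hd' : ∀ l, 1 ≤ l → l ≤ N → ‖d l‖ ≤ (H (τ l)).toReal - (H (τ (l - 1))).toReal :=
    fun l h1 hl => ENNReal.le_toReal_sub_of_ofReal_le_tsub (hd l h1 hl)
      (hHτ (mem_Iic.2 (by omega)) (by simpa using hl) (Nat.sub_le l 1)) (hfin l hl)
  have hts : stepFun T N τ m0 d t = stepFun T N τ m0 d (τ j) := by
    rw [stepFun_eq_of_mem_Ico m0 d hp hN hj ht,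
      stepFun_eq_of_mem_Ico m0 d hp hN hj ⟨le_rfl, ht.1.trans_lt ht.2⟩]
  rw [hts, add_sub_cancel_left, norm_smul]
  exact (mul_le_of_le_one_left (norm_nonneg _)
    (ENNReal.norm_toReal_tsub_div_toReal_tsub_le_one (hH ht.2.le) (hfin _ hj))).trans
    (norm_stepFun_succ_sub_le m0 d hp hN hw hd' hj)

end stepFun

theorem stmt13_general {n k : ℕ} (S T : ℝ) (hST : S < T)
    (A : Set (Eucl k))
    (F : ℝ → Eucl n → Eucl k → Set (Eucl n))
    (xbar : ℝ → Eucl n)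
    (δ ε : ℝ) (hε : 0 < ε)
    (hfin : etaE F xbar A S δ ε T < ⊤)
    (N : ℕ → ℕ) (τ : ℕ → ℕ → ℝ) (hpart : ∀ i, IsPartition S T (N i) (τ i))
    (hA1 : ∀ ε' > (0 : ℝ), ∃ I0 : ℕ, ∀ i ≥ I0, MeshLE (N i) (τ i) ε')
    (m0 : ℕ → Eucl n) (d : ℕ → ℕ → Eucl n)
    (I0 : ℕ)
    (hA3 : ∀ i ≥ I0, ∀ j : ℕ, 1 ≤ j → j ≤ N i →
      ENNReal.ofReal ‖d i j‖ ≤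
        etaE F xbar A S δ ε (τ i j) - etaE F xbar A S δ ε (τ i (j - 1)))
    (mt : ℕ → ℝ → Eucl n)
    (hmtT : ∀ i, mt i T = stepFun T (N i) (τ i) (m0 i) (d i) T)
    (hmt : ∀ i, ∀ j < N i, ∀ t ∈ Ico (τ i j) (τ i (j + 1)),
      mt i t = stepFun T (N i) (τ i) (m0 i) (d i) (τ i j) +
        ((etaE F xbar A S δ ε t - etaE F xbar A S δ ε (τ i j)).toReal /
          (etaE F xbar A S δ ε (τ i (j + 1)) - etaE F xbar A S δ ε (τ i j)).toReal) •
          (stepFun T (N i) (τ i) (m0 i) (d i) (τ i (j + 1)) -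
            stepFun T (N i) (τ i) (m0 i) (d i) (τ i j))) :
    ∀ t ∈ Icc S T,
      ContinuousWithinAt (fun s => etaE F xbar A S δ ε s) (Icc S T) t →
      Tendsto (fun i => mt i t - stepFun T (N i) (τ i) (m0 i) (d i) t)
        atTop (𝓝 0) := by
  intro t ht hcont
  set H := etaE F xbar A S δ ε
  have hH : Monotone H := monotone_etaE F xbar A S δ hε
  rcases ht.2.eq_or_lt with rfl | htT
  · simp [hmtT]
  choose j hj hjt using fun i => (hpart i).exists_mem_Ico ⟨ht.1, htT⟩
  have hmesh : ∀ ε' > 0, ∀ᶠ i in atTop, MeshLE (N i) (τ i) ε' :=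
    fun ε' hε' => eventually_atTop.2 (hA1 ε' hε')
  have hlo : ∀ i, τ i (j i - 1) ≤ t := fun i => ((hpart i).pred_le (hj i).le).trans (hjt i).1
  have hhi : ∀ i, t ≤ τ i (j i + 1) := fun i => (hjt i).2.le
  have hlim : ∀ l : ℕ → ℕ, (∀ i, l i ≤ N i) →
      (∀ i, τ i (l i) ∈ Icc (τ i (j i - 1)) (τ i (j i + 1))) →
      Tendsto (fun i => (H (τ i (l i))).toReal) atTop (𝓝 (H t).toReal) := fun l hl hmem =>
    hcont.tendsto_toReal_comp (ne_top_of_le_ne_top hfin.ne (hH ht.2))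
      (tendsto_of_mem_Icc_of_meshLE hmesh hj (fun i => ⟨hlo i, hhi i⟩) hmem)
      fun i => (hpart i).mem_Icc (hl i)
  have hbound : ∀ᶠ i in atTop, ‖mt i t - stepFun T (N i) (τ i) (m0 i) (d i) t‖ ≤
      (H (τ i (j i + 1))).toReal - (H (τ i (j i - 1))).toReal := by
    filter_upwards [eventually_ge_atTop I0, hmesh ((T - S) / 2) (by linarith)] with i hi hmi
    rw [hmt i (j i) (hj i) t (hjt i)]
    exact norm_interpolant_sub_stepFun_le (m0 i) (d i) hH hfin.ne
      (hpart i) ((hpart i).two_le_of_meshLE hmi (by linarith)) (hA3 i hi) (hj i) (hjt i)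
  rw [tendsto_zero_iff_norm_tendsto_zero]
  refine squeeze_zero' (Eventually.of_forall fun i => norm_nonneg _) hbound ?_
  simpa using (hlim (j · + 1) hj fun i => ⟨(hlo i).trans (hhi i), le_rfl⟩).sub
    (hlim (j · - 1) (fun i => (Nat.sub_le _ 1).trans (hj i).le) fun i =>
      ⟨le_rfl, (hlo i).trans (hhi i)⟩)

/-- In the setting of the interpolation lemma (mesh of the partitions
tending to `0`, jumps dominated by increments of `η^δ_ε`), at every point `t ∈ [S,T]`
where the monotone function `η^δ_ε` is continuous, `m̃_i(t) − m_i(t) → 0` as `i → ∞`. -/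
theorem stmt13 {n k : ℕ} (S T : ℝ) (hST : S < T)
    (A : Set (Eucl k)) (hA : IsCompact A)
    (F : ℝ → Eucl n → Eucl k → Set (Eucl n))
    (hFval : ∀ t x a, (F t x a).Nonempty ∧ IsClosed (F t x a))
    (xbar : ℝ → Eucl n) (hx : ContinuousOn xbar (Icc S T))
    (δ ε : ℝ) (hδ : 0 < δ) (hε : 0 < ε)
    (hfin : etaE F xbar A S δ ε T < ⊤)
    (N : ℕ → ℕ) (τ : ℕ → ℕ → ℝ) (hpart : ∀ i, IsPartition S T (N i) (τ i))
    (hA1 : ∀ ε' > (0 : ℝ), ∃ I0 : ℕ, ∀ i ≥ I0, MeshLE (N i) (τ i) ε')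
    (m0 : ℕ → Eucl n) (d : ℕ → ℕ → Eucl n)
    (I0 : ℕ)
    (hA3 : ∀ i ≥ I0, ∀ j : ℕ, 1 ≤ j → j ≤ N i →
      ENNReal.ofReal ‖d i j‖ ≤
        etaE F xbar A S δ ε (τ i j) - etaE F xbar A S δ ε (τ i (j - 1)))
    (mt : ℕ → ℝ → Eucl n)
    (hmtT : ∀ i, mt i T = stepFun T (N i) (τ i) (m0 i) (d i) T)
    (hmt : ∀ i, ∀ j < N i, ∀ t ∈ Ico (τ i j) (τ i (j + 1)),
      mt i t = stepFun T (N i) (τ i) (m0 i) (d i) (τ i j) +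
        ((etaE F xbar A S δ ε t - etaE F xbar A S δ ε (τ i j)).toReal /
          (etaE F xbar A S δ ε (τ i (j + 1)) - etaE F xbar A S δ ε (τ i j)).toReal) •
          (stepFun T (N i) (τ i) (m0 i) (d i) (τ i (j + 1)) -
            stepFun T (N i) (τ i) (m0 i) (d i) (τ i j))) :
    ∀ t ∈ Icc S T,
      ContinuousWithinAt (fun s => etaE F xbar A S δ ε s) (Icc S T) t →
      Tendsto (fun i => mt i t - stepFun T (N i) (τ i) (m0 i) (d i) t)
        atTop (𝓝 0) :=
  stmt13_general S T hST A F xbar δ ε hε hfin N τ hpart hA1 m0 d I0 hA3 mt hmtT hmt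
end

section
/- Let F : [S,T]×ℝ^n ⇒ ℝ^n take values nonempty closed sets, let x̄ : [S,T] → ℝ^n be continuous and of bounded variation, and suppose: there exist δ̄, k, c > 0 with F(t,x) ⊂ F(t,x') + k|x − x'|B and F(t,x) ⊂ cB for all x, x' ∈ x̄(t) + δ̄B and t ∈ [S,T]; and t ↦ F(t,·) has bounded variation along x̄ (i.e. the cumulative variation η satisfies η(T) < ∞). Let q : [S,T] → ℝ^n be any function of bounded variation. Then the function t ↦ max{ q(t)·v : v ∈ F(t, x̄(t)) } has bounded variation on [S,T]. -/
open Set Metric Filter MeasureTheory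
open scoped ENNReal Topology Classical

section Helpers

variable {n k : ℕ}

/-- The supremal Hausdorff-distance weight over the tube on `[s,t]`. -/
noncomputable def Wfn (F : ℝ → Eucl n → Eucl k → Set (Eucl n)) (xbar : ℝ → Eucl n)
    (A : Set (Eucl k)) (δ s t : ℝ) : ℝ≥0∞ :=
  ⨆ x ∈ tube xbar s t δ, ⨆ a ∈ A, EMetric.hausdorffEdist (F t x a) (F s x a)

lemma variSum_eq_sum (F : ℝ → Eucl n → Eucl k → Set (Eucl n)) (xbar : ℝ → Eucl n)
    (A : Set (Eucl k)) (δ : ℝ) (N : ℕ) (τ : ℕ → ℝ) :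
    variSum F xbar A δ N τ = ∑ i ∈ Finset.range N, Wfn F xbar A δ (τ i) (τ (i + 1)) := rfl

lemma Wfn_self (F : ℝ → Eucl n → Eucl k → Set (Eucl n)) (xbar : ℝ → Eucl n)
    (A : Set (Eucl k)) (δ s : ℝ) : Wfn F xbar A δ s s = 0 := by
  refine le_antisymm ?_ (zero_le)
  refine iSup₂_le fun x _ => iSup₂_le fun a _ => ?_
  simp [EMetric.hausdorffEdist, Metric.hausdorffEDist_self]

lemma partition_lt {N : ℕ} {τ : ℕ → ℝ} (h : ∀ i < N, τ i < τ (i + 1)) :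
    ∀ j, ∀ i, i < j → j ≤ N → τ i < τ j := by
  intro j
  induction j with
  | zero => intro i hi _; omega
  | succ j ih =>
    intro i hi hj
    rcases Nat.lt_succ_iff_lt_or_eq.mp hi with h' | h'
    · exact (ih i h' (by omega)).trans (h j (by omega))
    · subst h'; exact h i (by omega)

lemma exists_partition (a b ε : ℝ) (hab : a < b) (hε : 0 < ε) :
    ∃ N τ, IsPartition a b N τ ∧ MeshLE N τ ε := by
  set K := max 1 ⌈(b - a) / ε⌉₊ with hKdef
  have hK0 : 0 < K := lt_of_lt_of_le one_pos (le_max_left 1 _)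
  have hKR : (0:ℝ) < (K:ℝ) := by exact_mod_cast hK0
  have hKne : (K:ℝ) ≠ 0 := ne_of_gt hKR
  have hstep : (0:ℝ) < (b - a) / K := div_pos (by linarith) hKR
  have hstepε : (b - a) / K ≤ ε := by
    have hle : (b - a) / ε ≤ (K:ℝ) := le_trans (Nat.le_ceil _)
      (by exact_mod_cast le_max_right 1 ⌈(b - a) / ε⌉₊)
    rw [div_le_iff₀ hKR]
    rw [div_le_iff₀ hε] at hle
    nlinarith
  refine ⟨K, fun i => a + i * ((b - a) / K), ⟨hK0, by simp, ?_, ?_⟩, ?_⟩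
  · show a + (K:ℝ) * ((b - a) / K) = b
    rw [mul_comm, div_mul_cancel₀ _ hKne]; ring
  · intro i _
    show a + (i:ℝ) * ((b - a) / K) < a + ((i:ℕ) + 1 : ℕ) * ((b - a) / K)
    push_cast
    nlinarith
  · intro i _
    show a + ((i:ℕ) + 1 : ℕ) * ((b - a) / K) - (a + (i:ℝ) * ((b - a) / K)) ≤ ε
    push_cast
    nlinarith

lemma variSum_le_etaE (F : ℝ → Eucl n → Eucl k → Set (Eucl n)) (xbar : ℝ → Eucl n)
    (A : Set (Eucl k)) {S t δ ε : ℝ} {N : ℕ} {τ : ℕ → ℝ}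
    (h1 : IsPartition S t N τ) (h2 : MeshLE N τ ε) :
    variSum F xbar A δ N τ ≤ etaE F xbar A S δ ε t := by
  unfold etaE
  exact le_iSup_of_le N (le_iSup_of_le τ (le_iSup_of_le h1 (le_iSup_of_le h2 le_rfl)))

lemma etaE_base (F : ℝ → Eucl n → Eucl k → Set (Eucl n)) (xbar : ℝ → Eucl n)
    (A : Set (Eucl k)) (S δ ε : ℝ) : etaE F xbar A S δ ε S = 0 := by
  refine le_antisymm ?_ (zero_le)
  refine iSup_le fun N => iSup_le fun τ => iSup_le fun hP => iSup_le fun _ => ?_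
  have := partition_lt hP.2.2.2 N 0 hP.1 le_rfl
  rw [hP.2.1, hP.2.2.1] at this
  exact absurd this (lt_irrefl S)

lemma extend_partition (F : ℝ → Eucl n → Eucl k → Set (Eucl n)) (xbar : ℝ → Eucl n)
    (A : Set (Eucl k)) {S s t δ ε : ℝ} {N : ℕ} {τ : ℕ → ℝ}
    (hp : IsPartition S s N τ) (hm : MeshLE N τ ε) (hst : s < t) (hts : t - s ≤ ε) :
    IsPartition S t (N + 1) (fun i => if i ≤ N then τ i else t) ∧
    MeshLE (N + 1) (fun i => if i ≤ N then τ i else t) ε ∧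
    variSum F xbar A δ (N + 1) (fun i => if i ≤ N then τ i else t)
      = variSum F xbar A δ N τ + Wfn F xbar A δ s t := by
  obtain ⟨hN, h0, hNτ, hlt⟩ := hp
  refine ⟨⟨Nat.succ_pos N, by simpa using h0, by simp, ?_⟩, ?_, ?_⟩
  · intro i hi
    rcases Nat.lt_succ_iff_lt_or_eq.mp hi with h | rfl
    · simp only [if_pos (le_of_lt h), if_pos (Nat.succ_le_of_lt h)]
      exact hlt i h
    · simp only [if_pos le_rfl, if_neg (by omega : ¬ i + 1 ≤ i)]
      rw [hNτ]; exact hst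
  · intro i hi
    rcases Nat.lt_succ_iff_lt_or_eq.mp hi with h | rfl
    · simp only [if_pos (le_of_lt h), if_pos (Nat.succ_le_of_lt h)]
      exact hm i h
    · simp only [if_pos le_rfl, if_neg (by omega : ¬ i + 1 ≤ i)]
      rw [hNτ]; exact hts
  · rw [variSum_eq_sum, variSum_eq_sum, Finset.sum_range_succ]
    congr 1
    · refine Finset.sum_congr rfl fun i hi => ?_
      have hiN : i < N := Finset.mem_range.mp hi
      rw [if_pos (le_of_lt hiN), if_pos (Nat.succ_le_of_lt hiN)]
    · rw [if_pos le_rfl, if_neg (by omega : ¬ N + 1 ≤ N), hNτ]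

lemma Wfn_le_etaE (F : ℝ → Eucl n → Eucl k → Set (Eucl n)) (xbar : ℝ → Eucl n)
    (A : Set (Eucl k)) {S δ ε s t : ℝ} (hε : 0 < ε)
    (hSs : S ≤ s) (hst : s < t) (hm : t - s ≤ ε) :
    Wfn F xbar A δ s t ≤ etaE F xbar A S δ ε t := by
  rcases eq_or_lt_of_le hSs with rfl | hS
  · have hp : IsPartition S t 1 (fun i => if i = 0 then S else t) := by
      refine ⟨one_pos, by simp, by simp, ?_⟩
      intro i hi
      have : i = 0 := by omega
      subst this
      simpa using hst
    have hm1 : MeshLE 1 (fun i => if i = 0 then S else t) ε := by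
      intro i hi
      have : i = 0 := by omega
      subst this
      simpa using hm
    have := variSum_le_etaE F xbar A (δ := δ) hp hm1
    rw [variSum_eq_sum, Finset.sum_range_one] at this
    simpa using this
  · obtain ⟨N, τ, hp, hmp⟩ := exists_partition S s ε hS hε
    obtain ⟨hp', hm', hv⟩ := extend_partition F xbar A (δ := δ) hp hmp hst hm
    calc Wfn F xbar A δ s t ≤ variSum F xbar A δ N τ + Wfn F xbar A δ s t := le_add_self
    _ = variSum F xbar A δ (N + 1) (fun i => if i ≤ N then τ i else t) := hv.symm
    _ ≤ etaE F xbar A S δ ε t := variSum_le_etaE F xbar A hp' hm'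

lemma etaE_superadd (F : ℝ → Eucl n → Eucl k → Set (Eucl n)) (xbar : ℝ → Eucl n)
    (A : Set (Eucl k)) {S δ ε : ℝ} (hε : 0 < ε) {s t : ℝ}
    (hSs : S ≤ s) (hst : s ≤ t) (hm : t - s ≤ ε) :
    etaE F xbar A S δ ε s + Wfn F xbar A δ s t ≤ etaE F xbar A S δ ε t := by
  rcases eq_or_lt_of_le hst with rfl | hlt
  · rw [Wfn_self, add_zero]
  have hWle : Wfn F xbar A δ s t ≤ etaE F xbar A S δ ε t := Wfn_le_etaE F xbar A hε hSs hlt hm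
  rcases eq_or_lt_of_le hSs with rfl | hS
  · rw [etaE_base, zero_add]; exact hWle
  · unfold etaE
    rw [ENNReal.iSup_add]
    refine iSup_le fun N => ?_
    rw [ENNReal.iSup_add]
    refine iSup_le fun τ => ?_
    by_cases hP : IsPartition S s N τ
    · by_cases hQ : MeshLE N τ ε
      · rw [iSup_pos hP, iSup_pos hQ]
        obtain ⟨hp', hm', hv⟩ := extend_partition F xbar A (δ := δ) hP hQ hlt hm
        rw [← hv]
        exact variSum_le_etaE F xbar A hp' hm'
      · have h0 : (⨆ (_ : IsPartition S s N τ), ⨆ (_ : MeshLE N τ ε),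
            variSum F xbar A δ N τ) = 0 := by simp [hQ]
        rw [h0, zero_add]; exact hWle
    · have h0 : (⨆ (_ : IsPartition S s N τ), ⨆ (_ : MeshLE N τ ε),
          variSum F xbar A δ N τ) = 0 := by simp [hP]
      rw [h0, zero_add]; exact hWle

end Helpers

lemma le_Wfn {n k : ℕ} (F : ℝ → Eucl n → Eucl k → Set (Eucl n)) (xbar : ℝ → Eucl n)
    (A : Set (Eucl k)) (δ s t : ℝ) (x : Eucl n) (a : Eucl k)
    (hx : x ∈ tube xbar s t δ) (ha : a ∈ A) :
    EMetric.hausdorffEdist (F t x a) (F s x a) ≤ Wfn F xbar A δ s t := by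
  calc EMetric.hausdorffEdist (F t x a) (F s x a)
      ≤ ⨆ a ∈ A, EMetric.hausdorffEdist (F t x a) (F s x a) :=
        le_iSup₂ (f := fun a (_ : a ∈ A) => EMetric.hausdorffEdist (F t x a) (F s x a)) a ha
    _ ≤ Wfn F xbar A δ s t :=
        le_iSup₂ (f := fun x (_ : x ∈ tube xbar s t δ) =>
          ⨆ a ∈ A, EMetric.hausdorffEdist (F t x a) (F s x a)) x hx

set_option maxHeartbeats 2000000 in
/-- If `F(t,x)` is Lipschitz in `x` and bounded near a continuous arc
`x̄` of bounded variation, `t ↦ F(t,·)` has bounded variation along `x̄`, and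
`q` has bounded variation, then `t ↦ max { q(t)·v : v ∈ F(t, x̄(t)) }` has bounded
variation on `[S,T]`.  (Here `F` is parameter-free; it is encoded with the trivial
parameter set `univ ⊆ ℝ⁰`.) -/
theorem stmt16 {n : ℕ} (S T : ℝ) (hST : S < T)
    (F : ℝ → Eucl n → Set (Eucl n))
    (hFval : ∀ t x, (F t x).Nonempty ∧ IsClosed (F t x))
    (xbar : ℝ → Eucl n) (hx : ContinuousOn xbar (Icc S T))
    (hxBV : BoundedVariationOn xbar (Icc S T))
    (δbar c L : ℝ) (hδbar : 0 < δbar) (hc : 0 < c) (hL : 0 < L)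
    (hLip : ∀ t ∈ Icc S T, ∀ x x' : Eucl n,
      dist x (xbar t) ≤ δbar → dist x' (xbar t) ≤ δbar →
      ∀ y ∈ F t x, ∃ z ∈ F t x', dist y z ≤ L * dist x x')
    (hbd : ∀ t ∈ Icc S T, ∀ x : Eucl n, dist x (xbar t) ≤ δbar →
      F t x ⊆ closedBall 0 c)
    (hFBV : eta (fun t x _ => F t x) xbar (Set.univ : Set (Eucl 0)) S T < ⊤)
    (q : ℝ → Eucl n) (hq : BoundedVariationOn q (Icc S T)) :
    BoundedVariationOn
      (fun t => sSup ((fun v => (inner ℝ (q t) v : ℝ)) '' F t (xbar t))) (Icc S T) := by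
  classical
  set m : ℝ → ℝ := fun t => sSup ((fun v => (inner ℝ (q t) v : ℝ)) '' F t (xbar t)) with hmdef
  -- extract finite cumulative variation bound
  unfold eta at hFBV
  obtain ⟨δ0, hFBV⟩ := iInf_lt_iff.mp hFBV
  obtain ⟨hδ0, hFBV⟩ := iInf_lt_iff.mp hFBV
  unfold etaD at hFBV
  obtain ⟨ε0, hFBV⟩ := iInf_lt_iff.mp hFBV
  obtain ⟨hε0, hM⟩ := iInf_lt_iff.mp hFBV
  set g : ℝ → ℝ≥0∞ := fun r => etaE (fun t x _ => F t x) xbar (Set.univ : Set (Eucl 0)) S δ0 ε0 r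
    with hgdef
  have hMne : g T ≠ ⊤ := hM.ne
  -- uniform continuity of the arc
  have hucont := (isCompact_Icc.uniformContinuousOn_of_continuous hx)
  rw [Metric.uniformContinuousOn_iff] at hucont
  obtain ⟨ε1, hε1, hu⟩ := hucont δbar hδbar
  set ε : ℝ := min ε0 (ε1 / 2) with hεdef
  have hε : 0 < ε := lt_min hε0 (by linarith)
  have hεε0 : ε ≤ ε0 := min_le_left _ _
  have hxδbar : ∀ r ∈ Icc S T, ∀ r' ∈ Icc S T, |r - r'| ≤ ε → dist (xbar r) (xbar r') ≤ δbar := by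
    intro r hr r' hr' hd
    have hlt : dist r r' < ε1 := by
      rw [Real.dist_eq]
      calc |r - r'| ≤ ε := hd
        _ ≤ ε1 / 2 := min_le_right _ _
        _ < ε1 := by linarith
    exact (hu r hr r' hr' hlt).le
  -- bound on ‖q‖
  have hVq : eVariationOn q (Icc S T) ≠ ⊤ := hq
  set Q : ℝ := ‖q S‖ + (eVariationOn q (Icc S T)).toReal + 1 with hQdef
  have hSmem : S ∈ Icc S T := ⟨le_rfl, hST.le⟩
  have hQbound : ∀ r ∈ Icc S T, ‖q r‖ ≤ Q := by
    intro r hr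
    have h1 : edist (q r) (q S) ≤ eVariationOn q (Icc S T) := eVariationOn.edist_le q hr hSmem
    have h2 : dist (q r) (q S) ≤ (eVariationOn q (Icc S T)).toReal := by
      rw [dist_edist]
      exact ENNReal.toReal_mono hVq h1
    have h3 := norm_sub_norm_le (q r) (q S)
    rw [← dist_eq_norm] at h3
    rw [hQdef]
    linarith
  have hQpos : 0 < Q := by
    rw [hQdef]
    have := norm_nonneg (q S)
    have := ENNReal.toReal_nonneg (a := eVariationOn q (Icc S T))
    linarith
  have hQne : Q ≠ 0 := ne_of_gt hQpos
  -- upper bounds on the image sets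
  have himgub : ∀ r ∈ Icc S T, ∀ u ∈ Icc S T, ∀ x : Eucl n, dist x (xbar r) ≤ δbar →
      ∀ y ∈ (fun v => (inner ℝ (q u) v : ℝ)) '' F r x, y ≤ Q * c := by
    rintro r hr u hu x hxd y ⟨v, hv, rfl⟩
    have hvc : ‖v‖ ≤ c := by
      have := hbd r hr x hxd hv
      rwa [mem_closedBall_zero_iff] at this
    calc (inner ℝ (q u) v : ℝ) ≤ ‖q u‖ * ‖v‖ := real_inner_le_norm _ _
      _ ≤ Q * c := mul_le_mul (hQbound u hu) hvc (norm_nonneg _) (le_of_lt hQpos)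
  -- the key local estimate
  have key : ∀ s ∈ Icc S T, ∀ t ∈ Icc S T, s ≤ t → t - s ≤ ε →
      edist (m t) (m s) ≤ ENNReal.ofReal c * edist (q t) (q s)
        + ENNReal.ofReal (Q * L) * edist (xbar t) (xbar s)
        + ENNReal.ofReal Q * (Wfn (fun t x _ => F t x) xbar (Set.univ : Set (Eucl 0)) δ0 s t
            + Wfn (fun t x _ => F t x) xbar (Set.univ : Set (Eucl 0)) δ0 s t) := by
    intro s hs t ht hst hmesh
    have habs_ts : |t - s| ≤ ε := by rw [abs_of_nonneg (by linarith)]; exact hmesh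
    have hdts : dist (xbar t) (xbar s) ≤ δbar := hxδbar t ht s hs habs_ts
    have hdst : dist (xbar s) (xbar t) ≤ δbar := by rwa [dist_comm]
    have hAne := (hFval t (xbar t)).1
    have hBtne := (hFval s (xbar t)).1
    have hBsne := (hFval s (xbar s)).1
    have hA'ne := (hFval t (xbar s)).1
    have hsubA : F t (xbar t) ⊆ closedBall 0 c := hbd t ht _ (by simp [hδbar.le])
    have hsubBt : F s (xbar t) ⊆ closedBall 0 c := hbd s hs _ hdts
    have hsubBs : F s (xbar s) ⊆ closedBall 0 c := hbd s hs _ (by simp [hδbar.le])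
    have hsubA' : F t (xbar s) ⊆ closedBall 0 c := hbd t ht _ hdst
    have hbb := Metric.isBounded_closedBall (x := (0 : Eucl n)) (r := c)
    have fin1 : EMetric.hausdorffEdist (F t (xbar t)) (F s (xbar t)) ≠ ⊤ :=
      Metric.hausdorffEdist_ne_top_of_nonempty_of_bounded hAne hBtne
        (hbb.subset hsubA) (hbb.subset hsubBt)
    have fin2 : EMetric.hausdorffEdist (F t (xbar s)) (F s (xbar s)) ≠ ⊤ :=
      Metric.hausdorffEdist_ne_top_of_nonempty_of_bounded hA'ne hBsne
        (hbb.subset hsubA') (hbb.subset hsubBs)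
    set e1 := Metric.hausdorffDist (F t (xbar t)) (F s (xbar t)) with he1
    set e2 := Metric.hausdorffDist (F t (xbar s)) (F s (xbar s)) with he2
    have he1n : 0 ≤ e1 := Metric.hausdorffDist_nonneg
    have he2n : 0 ≤ e2 := Metric.hausdorffDist_nonneg
    have hbddt : BddAbove ((fun v => (inner ℝ (q t) v : ℝ)) '' F t (xbar t)) :=
      ⟨Q * c, fun y hy => himgub t ht t ht _ (by simp [hδbar.le]) y hy⟩
    have hbdds : BddAbove ((fun v => (inner ℝ (q s) v : ℝ)) '' F s (xbar s)) :=
      ⟨Q * c, fun y hy => himgub s hs s hs _ (by simp [hδbar.le]) y hy⟩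
    -- direction 1
    have dir1 : ∀ ρ : ℝ, 0 < ρ →
        m t - m s ≤ c * dist (q t) (q s) + Q * L * dist (xbar t) (xbar s) + Q * e1 + Q * ρ := by
      intro ρ hρ
      have hmt : m t ≤ m s
          + (c * dist (q t) (q s) + Q * L * dist (xbar t) (xbar s) + Q * e1 + Q * ρ) := by
        simp only [hmdef]
        refine csSup_le (hAne.image _) ?_
        rintro y ⟨v, hv, rfl⟩
        obtain ⟨v', hv', hvv'⟩ := Metric.exists_dist_lt_of_hausdorffDist_lt hv
          (lt_add_of_pos_right e1 hρ) fin1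
        obtain ⟨v'', hv'', hv'v''⟩ := hLip s hs (xbar t) (xbar s) hdts (by simp [hδbar.le]) v' hv'
        have hle1 : (inner ℝ (q s) v'' : ℝ) ≤ sSup ((fun v => (inner ℝ (q s) v : ℝ)) '' F s (xbar s)) :=
          le_csSup hbdds ⟨v'', hv'', rfl⟩
        have hsplit : (inner ℝ (q t) v : ℝ) - (inner ℝ (q s) v'' : ℝ)
            = (inner ℝ (q t - q s) v : ℝ) + (inner ℝ (q s) (v - v'') : ℝ) := by
          rw [inner_sub_left, inner_sub_right]; ring
        have hvnorm : ‖v‖ ≤ c := by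
          have := hsubA hv; rwa [mem_closedBall_zero_iff] at this
        have b1 : (inner ℝ (q t - q s) v : ℝ) ≤ dist (q t) (q s) * c := by
          calc (inner ℝ (q t - q s) v : ℝ) ≤ ‖q t - q s‖ * ‖v‖ := real_inner_le_norm _ _
            _ ≤ dist (q t) (q s) * c := by
              rw [dist_eq_norm]
              exact mul_le_mul le_rfl hvnorm (norm_nonneg _) (norm_nonneg _)
        have b2 : (inner ℝ (q s) (v - v'') : ℝ) ≤ Q * (e1 + ρ + L * dist (xbar t) (xbar s)) := by
          calc (inner ℝ (q s) (v - v'') : ℝ) ≤ ‖q s‖ * ‖v - v''‖ := real_inner_le_norm _ _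
            _ ≤ Q * (e1 + ρ + L * dist (xbar t) (xbar s)) := by
              apply mul_le_mul (hQbound s hs) ?_ (norm_nonneg _) hQpos.le
              rw [← dist_eq_norm]
              calc dist v v'' ≤ dist v v' + dist v'' v' := dist_triangle_right _ _ _
                _ ≤ (e1 + ρ) + L * dist (xbar t) (xbar s) := by
                  rw [dist_comm v'' v']
                  exact add_le_add hvv'.le hv'v''
                _ = e1 + ρ + L * dist (xbar t) (xbar s) := by ring
        nlinarith
      linarith
    -- direction 2
    have dir2 : ∀ ρ : ℝ, 0 < ρ →
        m s - m t ≤ c * dist (q t) (q s) + Q * L * dist (xbar t) (xbar s) + Q * e2 + Q * ρ := by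
      intro ρ hρ
      have hcomm : Metric.hausdorffDist (F s (xbar s)) (F t (xbar s)) = e2 := by
        rw [he2, Metric.hausdorffDist_comm]
      have fin2' : EMetric.hausdorffEdist (F s (xbar s)) (F t (xbar s)) ≠ ⊤ := by
        rwa [EMetric.hausdorffEdist, Metric.hausdorffEDist_comm]
      have hmt : m s ≤ m t
          + (c * dist (q t) (q s) + Q * L * dist (xbar t) (xbar s) + Q * e2 + Q * ρ) := by
        simp only [hmdef]
        refine csSup_le (hBsne.image _) ?_
        rintro y ⟨v, hv, rfl⟩
        obtain ⟨v', hv', hvv'⟩ := Metric.exists_dist_lt_of_hausdorffDist_lt hv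
          (by rw [hcomm]; exact lt_add_of_pos_right e2 hρ) fin2'
        obtain ⟨v'', hv'', hv'v''⟩ := hLip t ht (xbar s) (xbar t) hdst (by simp [hδbar.le]) v' hv'
        have hle1 : (inner ℝ (q t) v'' : ℝ) ≤ sSup ((fun v => (inner ℝ (q t) v : ℝ)) '' F t (xbar t)) :=
          le_csSup hbddt ⟨v'', hv'', rfl⟩
        have hsplit : (inner ℝ (q s) v : ℝ) - (inner ℝ (q t) v'' : ℝ)
            = (inner ℝ (q s - q t) v : ℝ) + (inner ℝ (q t) (v - v'') : ℝ) := by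
          rw [inner_sub_left, inner_sub_right]; ring
        have hvnorm : ‖v‖ ≤ c := by
          have := hsubBs hv; rwa [mem_closedBall_zero_iff] at this
        have b1 : (inner ℝ (q s - q t) v : ℝ) ≤ dist (q t) (q s) * c := by
          calc (inner ℝ (q s - q t) v : ℝ) ≤ ‖q s - q t‖ * ‖v‖ := real_inner_le_norm _ _
            _ ≤ dist (q t) (q s) * c := by
              rw [dist_comm, dist_eq_norm]
              exact mul_le_mul le_rfl hvnorm (norm_nonneg _) (norm_nonneg _)
        have b2 : (inner ℝ (q t) (v - v'') : ℝ) ≤ Q * (e2 + ρ + L * dist (xbar t) (xbar s)) := by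
          calc (inner ℝ (q t) (v - v'') : ℝ) ≤ ‖q t‖ * ‖v - v''‖ := real_inner_le_norm _ _
            _ ≤ Q * (e2 + ρ + L * dist (xbar t) (xbar s)) := by
              apply mul_le_mul (hQbound t ht) ?_ (norm_nonneg _) hQpos.le
              rw [← dist_eq_norm]
              calc dist v v'' ≤ dist v v' + dist v'' v' := dist_triangle_right _ _ _
                _ ≤ (e2 + ρ) + L * dist (xbar t) (xbar s) := by
                  rw [dist_comm v'' v']
                  refine add_le_add hvv'.le ?_
                  rw [dist_comm (xbar t) (xbar s)]
                  exact hv'v''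
                _ = e2 + ρ + L * dist (xbar t) (xbar s) := by ring
        nlinarith
      linarith
    -- kill the slack ρ
    have drop : ∀ a b : ℝ, (∀ ρ : ℝ, 0 < ρ → a ≤ b + Q * ρ) → a ≤ b := by
      intro a b h
      by_contra hcon
      push_neg at hcon
      have h1 := h ((a - b) / (2 * Q)) (div_pos (by linarith) (by positivity))
      have h2 : Q * ((a - b) / (2 * Q)) = (a - b) / 2 := by
        field_simp
      rw [h2] at h1
      linarith
    have d1 : m t - m s ≤ c * dist (q t) (q s) + Q * L * dist (xbar t) (xbar s) + Q * e1 :=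
      drop _ _ (fun ρ hρ => by have := dir1 ρ hρ; linarith)
    have d2 : m s - m t ≤ c * dist (q t) (q s) + Q * L * dist (xbar t) (xbar s) + Q * e2 :=
      drop _ _ (fun ρ hρ => by have := dir2 ρ hρ; linarith)
    have habs : |m t - m s| ≤ c * dist (q t) (q s) + Q * L * dist (xbar t) (xbar s)
        + Q * (e1 + e2) := by
      rw [abs_sub_le_iff]
      constructor
      · nlinarith [mul_nonneg hQpos.le he2n]
      · nlinarith [mul_nonneg hQpos.le he1n]
    -- pass to `ℝ≥0∞`
    have hxt_tube : xbar t ∈ tube xbar s t δ0 := ⟨t, ⟨hst, le_rfl⟩, by simp [hδ0.le]⟩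
    have hxs_tube : xbar s ∈ tube xbar s t δ0 := ⟨s, ⟨le_rfl, hst⟩, by simp [hδ0.le]⟩
    have hW1 : ENNReal.ofReal e1 ≤ Wfn (fun t x _ => F t x) xbar (Set.univ : Set (Eucl 0)) δ0 s t := by
      have heq : ENNReal.ofReal e1 = EMetric.hausdorffEdist (F t (xbar t)) (F s (xbar t)) :=
        ENNReal.ofReal_toReal fin1
      rw [heq]
      exact le_Wfn (fun t x _ => F t x) xbar (Set.univ : Set (Eucl 0)) δ0 s t (xbar t) 0
        hxt_tube (mem_univ _)
    have hW2 : ENNReal.ofReal e2 ≤ Wfn (fun t x _ => F t x) xbar (Set.univ : Set (Eucl 0)) δ0 s t := by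
      have heq : ENNReal.ofReal e2 = EMetric.hausdorffEdist (F t (xbar s)) (F s (xbar s)) :=
        ENNReal.ofReal_toReal fin2
      rw [heq]
      exact le_Wfn (fun t x _ => F t x) xbar (Set.univ : Set (Eucl 0)) δ0 s t (xbar s) 0
        hxs_tube (mem_univ _)
    calc edist (m t) (m s) = ENNReal.ofReal |m t - m s| := by rw [edist_dist, Real.dist_eq]
      _ ≤ ENNReal.ofReal (c * dist (q t) (q s) + Q * L * dist (xbar t) (xbar s)
          + Q * (e1 + e2)) := ENNReal.ofReal_le_ofReal habs
      _ ≤ ENNReal.ofReal c * edist (q t) (q s) + ENNReal.ofReal (Q * L) * edist (xbar t) (xbar s)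
          + ENNReal.ofReal Q * (Wfn (fun t x _ => F t x) xbar (Set.univ : Set (Eucl 0)) δ0 s t
            + Wfn (fun t x _ => F t x) xbar (Set.univ : Set (Eucl 0)) δ0 s t) := by
        rw [ENNReal.ofReal_add (by positivity) (mul_nonneg hQpos.le (by positivity)),
          ENNReal.ofReal_add (by positivity) (mul_nonneg (mul_nonneg hQpos.le hL.le) dist_nonneg)]
        refine add_le_add (add_le_add ?_ ?_) ?_
        · rw [ENNReal.ofReal_mul hc.le, edist_dist]
        · rw [ENNReal.ofReal_mul (mul_nonneg hQpos.le hL.le), edist_dist]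
        · rw [ENNReal.ofReal_mul hQpos.le, ENNReal.ofReal_add he1n he2n]
          exact mul_le_mul_right (add_le_add hW1 hW2) _
  -- the grid
  set K : ℕ := max 1 ⌈(T - S) / ε⌉₊ with hKdef
  have hK0 : 0 < K := lt_of_lt_of_le one_pos (le_max_left _ _)
  have hKR : (0:ℝ) < (K:ℝ) := by exact_mod_cast hK0
  set step : ℝ := (T - S) / K with hstepdef
  have hsteppos : 0 < step := div_pos (by linarith) hKR
  have hstepε : step ≤ ε := by
    have hle : (T - S) / ε ≤ (K:ℝ) := le_trans (Nat.le_ceil _)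
      (by exact_mod_cast le_max_right 1 ⌈(T - S) / ε⌉₊)
    rw [hstepdef, div_le_iff₀ hKR]
    rw [div_le_iff₀ hε] at hle
    nlinarith
  set grid : ℕ → ℝ := fun j => S + j * step with hgriddef
  have hgrid0 : grid 0 = S := by simp [hgriddef]
  have hgridK : grid K = T := by
    simp only [hgriddef, hstepdef]
    rw [mul_comm, div_mul_cancel₀ _ (ne_of_gt hKR)]
    ring
  have hgridmono : ∀ j, grid j ≤ grid (j + 1) := by
    intro j
    simp only [hgriddef]
    push_cast
    nlinarith
  have hgridstep : ∀ j, grid (j + 1) - grid j = step := by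
    intro j
    simp only [hgriddef]
    push_cast
    ring
  have hgridmem : ∀ j ≤ K, grid j ∈ Icc S T := by
    intro j hj
    have hjR : (j:ℝ) ≤ (K:ℝ) := by exact_mod_cast hj
    have hjn : (0:ℝ) ≤ (j:ℝ) := Nat.cast_nonneg j
    constructor
    · simp only [hgriddef]; nlinarith
    · rw [← hgridK]; simp only [hgriddef]; nlinarith
  -- superadditivity of g
  have hsuper : ∀ s t : ℝ, S ≤ s → s ≤ t → t - s ≤ ε →
      g s + Wfn (fun t x _ => F t x) xbar (Set.univ : Set (Eucl 0)) δ0 s t ≤ g t := by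
    intro s t h1 h2 h3
    exact etaE_superadd (fun t x _ => F t x) xbar (Set.univ : Set (Eucl 0)) hε0 h1 h2
      (le_trans h3 hεε0)
  have hgmono_step : ∀ s t : ℝ, S ≤ s → s ≤ t → t - s ≤ ε → g s ≤ g t := by
    intro s t h1 h2 h3
    exact le_trans le_self_add (hsuper s t h1 h2 h3)
  have hgridM : ∀ j ≤ K, g (grid j) ≤ g T := by
    have hG : ∀ j, g (grid (min j K)) ≤ g (grid (min (j + 1) K)) := by
      intro j
      by_cases hj : j < K
      · rw [min_eq_left hj.le, min_eq_left (by omega : j + 1 ≤ K)]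
        exact hgmono_step _ _ (hgridmem j hj.le).1 (hgridmono j)
          (by rw [hgridstep]; exact hstepε)
      · rw [min_eq_right (by omega : K ≤ j), min_eq_right (by omega : K ≤ j + 1)]
    have hmono : Monotone (fun j => g (grid (min j K))) := monotone_nat_of_le_succ hG
    intro j hj
    have h := hmono (show j ≤ K from hj)
    simpa [min_eq_left hj, min_self, hgridK] using h
  -- the total bound for one piece
  set C : ℝ≥0∞ := ENNReal.ofReal c * eVariationOn q (Icc S T)
    + ENNReal.ofReal (Q * L) * eVariationOn xbar (Icc S T)
    + ENNReal.ofReal Q * (g T + g T) with hCdef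
  have hCne : C ≠ ⊤ := by
    rw [hCdef]
    exact ENNReal.add_ne_top.2 ⟨ENNReal.add_ne_top.2
      ⟨ENNReal.mul_ne_top ENNReal.ofReal_ne_top hVq,
       ENNReal.mul_ne_top ENNReal.ofReal_ne_top hxBV⟩,
      ENNReal.mul_ne_top ENNReal.ofReal_ne_top (ENNReal.add_ne_top.2 ⟨hMne, hMne⟩)⟩
  have piece : ∀ a b : ℝ, S ≤ a → a ≤ b → b ≤ T → b - a ≤ ε → g b ≤ g T →
      eVariationOn m (Icc S T ∩ Icc a b) ≤ C := by
    intro a b hSa hab hbT hba hgb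
    unfold eVariationOn
    refine iSup_le ?_
    rintro ⟨nn, u, hu, hus⟩
    have husST : ∀ i, u i ∈ Icc S T := fun i => (hus i).1
    have husab : ∀ i, u i ∈ Icc a b := fun i => (hus i).2
    have hui : ∀ i, u (i + 1) - u i ≤ ε := by
      intro i
      have h1 := (husab i).1
      have h2 := (husab (i + 1)).2
      linarith
    have hstep' : ∀ i, edist (m (u (i + 1))) (m (u i)) ≤
        ENNReal.ofReal c * edist (q (u (i + 1))) (q (u i))
        + ENNReal.ofReal (Q * L) * edist (xbar (u (i + 1))) (xbar (u i))
        + ENNReal.ofReal Q * (Wfn (fun t x _ => F t x) xbar (Set.univ : Set (Eucl 0)) δ0 (u i) (u (i + 1))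
            + Wfn (fun t x _ => F t x) xbar (Set.univ : Set (Eucl 0)) δ0 (u i) (u (i + 1))) :=
      fun i => key (u i) (husST i) (u (i + 1)) (husST (i + 1)) (hu (Nat.le_succ i)) (hui i)
    have hWsum : (∑ i ∈ Finset.range nn,
        Wfn (fun t x _ => F t x) xbar (Set.univ : Set (Eucl 0)) δ0 (u i) (u (i + 1))) ≤ g T := by
      have hchain : ∀ i, (∑ i' ∈ Finset.range i,
          Wfn (fun t x _ => F t x) xbar (Set.univ : Set (Eucl 0)) δ0 (u i') (u (i' + 1)))
          ≤ g (u i) := by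
        intro i
        induction i with
        | zero => simp
        | succ i ih =>
          rw [Finset.sum_range_succ]
          exact le_trans (add_le_add_left ih _)
            (hsuper (u i) (u (i + 1)) (husST i).1 (hu (Nat.le_succ i)) (hui i))
      have h2 : g (u nn) ≤ g b := hgmono_step (u nn) b (husST nn).1 (husab nn).2
        (by have := (husab nn).1; linarith)
      exact le_trans (hchain nn) (le_trans h2 hgb)
    calc (∑ i ∈ Finset.range nn, edist (m (u (i + 1))) (m (u i)))
        ≤ ∑ i ∈ Finset.range nn,
          (ENNReal.ofReal c * edist (q (u (i + 1))) (q (u i))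
          + ENNReal.ofReal (Q * L) * edist (xbar (u (i + 1))) (xbar (u i))
          + ENNReal.ofReal Q * (Wfn (fun t x _ => F t x) xbar (Set.univ : Set (Eucl 0)) δ0 (u i) (u (i + 1))
              + Wfn (fun t x _ => F t x) xbar (Set.univ : Set (Eucl 0)) δ0 (u i) (u (i + 1)))) :=
          Finset.sum_le_sum fun i _ => hstep' i
      _ = ENNReal.ofReal c * (∑ i ∈ Finset.range nn, edist (q (u (i + 1))) (q (u i)))
          + ENNReal.ofReal (Q * L) * (∑ i ∈ Finset.range nn, edist (xbar (u (i + 1))) (xbar (u i)))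
          + ENNReal.ofReal Q *
            ((∑ i ∈ Finset.range nn, Wfn (fun t x _ => F t x) xbar (Set.univ : Set (Eucl 0)) δ0 (u i) (u (i + 1)))
            + (∑ i ∈ Finset.range nn, Wfn (fun t x _ => F t x) xbar (Set.univ : Set (Eucl 0)) δ0 (u i) (u (i + 1)))) := by
          simp only [Finset.sum_add_distrib, ← Finset.mul_sum]
      _ ≤ C := by
          rw [hCdef]
          refine add_le_add (add_le_add ?_ ?_) ?_
          · exact mul_le_mul_right (eVariationOn.sum_le (f := q) (n := nn) hu husST) _
          · exact mul_le_mul_right (eVariationOn.sum_le (f := xbar) (n := nn) hu husST) _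
          · exact mul_le_mul_right (add_le_add hWsum hWsum) _
  -- assemble the pieces
  have hassem : ∀ j, j ≤ K → eVariationOn m (Icc S T ∩ Icc S (grid j)) ≠ ⊤ := by
    intro j
    induction j with
    | zero =>
      intro _
      rw [hgrid0]
      have hsub : (Icc S T ∩ Icc S S).Subsingleton := by
        rw [Icc_self]
        intro x hx y hy
        rw [hx.2, hy.2]
      rw [eVariationOn.subsingleton m hsub]
      exact ENNReal.zero_ne_top
    | succ j ih =>
      intro hj
      have hj' : j ≤ K := by omega
      have h1 : S ≤ grid j := (hgridmem j hj').1
      have h2 : grid j ≤ grid (j + 1) := hgridmono j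
      have heq := eVariationOn.Icc_add_Icc m h1 h2 (hgridmem j hj')
      rw [← heq]
      refine ENNReal.add_ne_top.2 ⟨ih hj', ?_⟩
      have hp := piece (grid j) (grid (j + 1)) h1 h2 (hgridmem (j + 1) hj).2
        (by rw [hgridstep]; exact hstepε) (hgridM (j + 1) hj)
      exact ne_top_of_le_ne_top hCne hp
  have hfin := hassem K le_rfl
  rw [hgridK, Set.inter_self] at hfin
  exact hfin
end

section
/- Let F : [S,T]×ℝ^n ⇒ ℝ^n take values nonempty closed sets and let x̄ : [S,T] → ℝ^n be an F-trajectory: x̄ is absolutely continuous and ẋ̄(t) ∈ F(t, x̄(t)) a.e. Suppose η^{δ}_{ε}(T) < ∞ for some δ, ε > 0. Let {t_j = S + j(T−S)/N}_{j=0}^{N} be the uniform partition of [S,T] into N subintervals with (T−S)/N ≤ ε, and define the time-discretized multifunction F_N(t,x) := F(t_j, x) for t ∈ [t_j, t_{j+1}), j = 0,…,N−1, and F_N(t,x) := F(t_{N−1}, x) for t ∈ [t_{N−1}, T]. Then ∫_S^T dist(ẋ̄(t), F_N(t, x̄(t))) dt ≤ ((T−S)/N) · (η^{δ}_{ε}(T)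 − η^{δ}_{ε}(S)), where dist(v, K) := inf{ |v − w| : w ∈ K }. In particular this bound tends to 0 as N → ∞. -/
/-!
Choose in every cell `(t_j, t_{j+1})` of the uniform grid a time `c_j` with
`ẋ̄(c_j) ∈ F(c_j, x̄(c_j))`. Then `dist(ẋ̄(c_j), F(t_j, x̄(c_j)))` is at most the Hausdorff distance
between `F(c_j, x̄(c_j))` and `F(t_j, x̄(c_j))`, and since the refinement
`t_0 < c_0 < t_1 < c_1 < ⋯ < t_N` still has mesh `≤ ε`, the sum of these distances is at most
`η^δ_ε(T)`. The `c_j` are chosen independently, so the sum over `j` of the suprema of the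
integrand over the admissible times of each cell is at most `η^δ_ε(T)` as well; almost every time
is admissible and the cells have length `(T - S)/N`, which bounds the integral. Finally
`η^δ_ε(S) = 0`, because `[S, S]` has no strict partition.
-/

open Set Metric Filter MeasureTheory
open scoped ENNReal Topology Classical

noncomputable section

/-- The grid point `t_j = S + j (T-S)/N` associated with `t ∈ [S,T]` for the uniform
partition of `[S,T]` into `N` subintervals: `j` is the index with `t ∈ [t_j, t_{j+1})`
for `j ≤ N-2`, and `j = N-1` for `t ∈ [t_{N-1}, T]`. -/
def gridPoint (S T : ℝ) (N : ℕ) (t : ℝ) : ℝ :=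
  S + ((min (N - 1) (⌊(t - S) * N / (T - S)⌋.toNat) : ℕ) : ℝ) * (T - S) / N

end

open Finset

lemma IsPartition.left_lt_right {a b : ℝ} {N : ℕ} {τ : ℕ → ℝ} (h : IsPartition a b N τ) :
    a < b := by
  obtain ⟨hN, rfl, rfl, hlt⟩ := h
  exact strictMonoOn_Iic_of_lt_succ (fun m hm => by simpa using hlt m hm)
    (Set.mem_Iic.2 (Nat.zero_le N)) Set.self_mem_Iic hN

lemma etaE_self {n k : ℕ} (F : ℝ → Eucl n → Eucl k → Set (Eucl n)) (xbar : ℝ → Eucl n)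
    (A : Set (Eucl k)) (S δ ε : ℝ) : etaE F xbar A S δ ε S = 0 :=
  le_antisymm (iSup_le fun _ => iSup_le fun _ => iSup_le fun hτ =>
    absurd hτ.left_lt_right (lt_irrefl S)) bot_le

section Refinement

def interleave (τ c : ℕ → ℝ) (i : ℕ) : ℝ :=
  if i % 2 = 0 then τ (i / 2) else c (i / 2)

variable {τ c : ℕ → ℝ} {N : ℕ}

@[simp]
lemma interleave_two_mul (τ c : ℕ → ℝ) (j : ℕ) : interleave τ c (2 * j) = τ j := by
  simp [interleave]

@[simp]
lemma interleave_two_mul_add_one (τ c : ℕ → ℝ) (j : ℕ) :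
    interleave τ c (2 * j + 1) = c j := by
  simp [interleave, Nat.add_mod, show (2 * j + 1) / 2 = j by omega]

lemma interleave_step (hc : ∀ j < N, c j ∈ Ioo (τ j) (τ (j + 1))) {i : ℕ} (hi : i < 2 * N) :
    τ (i / 2) ≤ interleave τ c i ∧ interleave τ c i < interleave τ c (i + 1) ∧
      interleave τ c (i + 1) ≤ τ (i / 2 + 1) := by
  obtain ⟨j, rfl | rfl⟩ := Nat.even_or_odd' i
  · have hj := hc j (by omega)
    simp only [interleave_two_mul, interleave_two_mul_add_one,
      show 2 * j / 2 = j by omega]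
    exact ⟨le_rfl, hj.1, hj.2.le⟩
  · have hj := hc j (by omega)
    simp only [interleave_two_mul_add_one, show 2 * j + 1 + 1 = 2 * (j + 1) by omega,
      interleave_two_mul, show (2 * j + 1) / 2 = j by omega]
    exact ⟨hj.1.le, hj.2, le_rfl⟩

lemma IsPartition.interleave {S T : ℝ} (hτ : IsPartition S T N τ)
    (hc : ∀ j < N, c j ∈ Ioo (τ j) (τ (j + 1))) : IsPartition S T (2 * N) (interleave τ c) :=
  ⟨by have := hτ.1; omega, (interleave_two_mul τ c 0).trans hτ.2.1,
    (interleave_two_mul τ c N).trans hτ.2.2.1,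
    fun _ hi => (interleave_step hc hi).2.1⟩

lemma MeshLE.interleave {ε : ℝ} (hτ : MeshLE N τ ε) (hc : ∀ j < N, c j ∈ Ioo (τ j) (τ (j + 1))) :
    MeshLE (2 * N) (interleave τ c) ε := fun i hi => by
  obtain ⟨h₁, -, h₃⟩ := interleave_step hc hi
  have := hτ (i / 2) (by omega)
  linarith

end Refinement

lemma Finset.sum_range_two_mul_le {M : Type*} [AddCommMonoid M] [PartialOrder M]
    [IsOrderedAddMonoid M] [CanonicallyOrderedAdd M] (f : ℕ → M) (N : ℕ) :
    ∑ j ∈ range N, f (2 * j) ≤ ∑ i ∈ range (2 * N), f i := by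
  induction N with
  | zero => simp
  | succ N ih =>
    rw [show 2 * (N + 1) = 2 * N + 1 + 1 by ring, sum_range_succ, sum_range_succ, sum_range_succ]
    exact le_add_right (add_le_add_left ih _)

theorem sum_infEDist_le_etaE {n k : ℕ} {F : ℝ → Eucl n → Eucl k → Set (Eucl n)}
    {xbar : ℝ → Eucl n} {A : Set (Eucl k)} {S T δ ε : ℝ} {N : ℕ} {τ c : ℕ → ℝ}
    (hτ : IsPartition S T N τ) (hmesh : MeshLE N τ ε) (hδ : 0 ≤ δ)
    (hc : ∀ j < N, c j ∈ Ioo (τ j) (τ (j + 1))) {a : Eucl k} (ha : a ∈ A) {v : ℕ → Eucl n}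
    (hv : ∀ j < N, v j ∈ F (c j) (xbar (c j)) a) :
    ∑ j ∈ range N, infEDist (v j) (F (τ j) (xbar (c j)) a) ≤ etaE F xbar A S δ ε T := by
  set σ := interleave τ c
  set g : ℕ → ℝ≥0∞ := fun i => ⨆ x ∈ tube xbar (σ i) (σ (i + 1)) δ, ⨆ a ∈ A,
    hausdorffEDist (F (σ (i + 1)) x a) (F (σ i) x a)
  have hterm : ∀ j < N, infEDist (v j) (F (τ j) (xbar (c j)) a) ≤ g (2 * j) := fun j hj => by
    have hx : xbar (c j) ∈ tube xbar (τ j) (c j) δ :=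
      ⟨c j, ⟨(hc j hj).1.le, le_rfl⟩, by rwa [dist_self]⟩
    simp only [g, σ, interleave_two_mul, interleave_two_mul_add_one]
    exact (infEDist_le_hausdorffEDist_of_mem (hv j hj)).trans
      (le_iSup₂_of_le (xbar (c j)) hx (le_iSup₂_of_le a ha le_rfl))
  calc ∑ j ∈ range N, infEDist (v j) (F (τ j) (xbar (c j)) a)
      ≤ ∑ j ∈ range N, g (2 * j) := sum_le_sum fun j hj => hterm j (Finset.mem_range.1 hj)
    _ ≤ variSum F xbar A δ (2 * N) σ := sum_range_two_mul_le g N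
    _ ≤ etaE F xbar A S δ ε T :=
      le_iSup₂_of_le (2 * N) σ (le_iSup₂_of_le (hτ.interleave hc) (hmesh.interleave hc) le_rfl)

section UniformGrid

noncomputable def gridNode (S T : ℝ) (N j : ℕ) : ℝ := S + j * ((T - S) / N)

variable {S T : ℝ} {N : ℕ}

lemma gridNode_zero : gridNode S T N 0 = S := by simp [gridNode]

lemma gridNode_self (hN : 0 < N) : gridNode S T N N = T := by
  have : (N : ℝ) ≠ 0 := by positivity
  simp [gridNode, mul_div_cancel₀ _ this]

lemma gridNode_succ (j : ℕ) : gridNode S T N (j + 1) = gridNode S T N j + (T - S) / N := by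
  simp only [gridNode]
  push_cast
  ring

lemma gridNode_strictMono (hST : S < T) (hN : 0 < N) : StrictMono (gridNode S T N) :=
  strictMono_nat_of_lt_succ fun j => by
    rw [gridNode_succ]
    have : 0 < (T - S) / N := div_pos (sub_pos.2 hST) (by exact_mod_cast hN)
    linarith

lemma gridNode_mem_Icc (hST : S < T) (hN : 0 < N) {j : ℕ} (hj : j ≤ N) :
    gridNode S T N j ∈ Icc S T := by
  have hmono := (gridNode_strictMono hST hN).monotone
  exact ⟨gridNode_zero.symm.le.trans (hmono j.zero_le), (hmono hj).trans (gridNode_self hN).le⟩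

lemma isPartition_gridNode (hST : S < T) (hN : 0 < N) : IsPartition S T N (gridNode S T N) :=
  ⟨hN, gridNode_zero, gridNode_self hN, fun j _ => gridNode_strictMono hST hN j.lt_succ_self⟩

lemma meshLE_gridNode {ε : ℝ} (hmesh : (T - S) / N ≤ ε) : MeshLE N (gridNode S T N) ε :=
  fun j _ => by rw [gridNode_succ]; linarith

lemma gridPoint_eq_gridNode (hST : S < T) (hN : 0 < N) {j : ℕ} (hj : j < N) {t : ℝ}
    (ht : t ∈ Ico (gridNode S T N j) (gridNode S T N (j + 1))) :
    gridPoint S T N t = gridNode S T N j := by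
  have hh : 0 < (T - S) / N := div_pos (sub_pos.2 hST) (by exact_mod_cast hN)
  rw [gridNode_succ] at ht
  have hfloor : ⌊(t - S) * N / (T - S)⌋ = j := by
    rw [Int.floor_eq_iff, show (t - S) * N / (T - S) = (t - S) / ((T - S) / N) by
      field_simp, le_div_iff₀ hh, div_lt_iff₀ hh]
    simp only [gridNode] at ht
    push_cast
    constructor <;> linarith [ht.1, ht.2]
  rw [gridPoint, hfloor, Int.toNat_natCast, min_eq_right (by omega), gridNode, mul_div_assoc]

end UniformGrid

lemma lintegral_Ioc_eq_sum_of_monotone {f : ℝ → ℝ≥0∞} {τ : ℕ → ℝ} (hτ : Monotone τ) (N : ℕ) :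
    ∫⁻ t in Ioc (τ 0) (τ N), f t = ∑ j ∈ range N, ∫⁻ t in Ioc (τ j) (τ (j + 1)), f t := by
  induction N with
  | zero => simp
  | succ N ih =>
    rw [sum_range_succ, ← ih, ← Ioc_union_Ioc_eq_Ioc (hτ (Nat.zero_le N)) (hτ N.le_succ),
      lintegral_union measurableSet_Ioc (Ioc_disjoint_Ioc_of_le le_rfl)]

theorem ENNReal.sum_biSup_le_of_forall_sum_le {ι α : Type*} {s : Finset ι} {G : ι → Set α}
    (hG : ∀ i ∈ s, (G i).Nonempty) {f : ι → α → ℝ≥0∞} {E : ℝ≥0∞}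
    (h : ∀ c : ι → α, (∀ i ∈ s, c i ∈ G i) → ∑ i ∈ s, f i (c i) ≤ E) :
    ∑ i ∈ s, ⨆ x ∈ G i, f i x ≤ E := by
  let C := {c : ι → α // ∀ i ∈ s, c i ∈ G i}
  have hchoice : ∀ i ∈ s, ⨆ x ∈ G i, f i x ≤ ⨆ c : C, f i (c.1 i) := fun i _ =>
    iSup₂_le fun x hx => by
      let c : ι → α := fun j => if j = i then x else if hj : j ∈ s then (hG j hj).some else x
      refine le_iSup_of_le ⟨c, fun j hj => ?_⟩ (by simp [c])
      by_cases hji : j = i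
      · simpa [c, hji] using hx
      · simpa [c, hji, hj] using (hG j hj).some_mem
  -- Choosing coordinatewise the better of two choices makes the family of choices directed.
  have hdir : ∀ c d : C, ∃ e : C, ∀ i, f i (c.1 i) ≤ f i (e.1 i) ∧ f i (d.1 i) ≤ f i (e.1 i) :=
    fun c d => by
      let e : ι → α := fun i => if f i (c.1 i) ≤ f i (d.1 i) then d.1 i else c.1 i
      refine ⟨⟨e, fun i hi => ?_⟩, fun i => ?_⟩ <;> simp only [e] <;> split_ifs with hcd
      exacts [d.2 i hi, c.2 i hi, ⟨hcd, le_rfl⟩, ⟨le_rfl, (not_le.1 hcd).le⟩]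
  calc ∑ i ∈ s, ⨆ x ∈ G i, f i x ≤ ∑ i ∈ s, ⨆ c : C, f i (c.1 i) := sum_le_sum hchoice
    _ = ⨆ c : C, ∑ i ∈ s, f i (c.1 i) := ENNReal.finsetSum_iSup hdir
    _ ≤ E := iSup_le fun c => h c.1 c.2

lemma ae_restrict_Ioc_mem_Ioo_and {P : ℝ → Prop} {S T a b : ℝ}
    (hP : ∀ᵐ t ∂volume.restrict (Icc S T), P t) (ha : S ≤ a) (hb : b ≤ T) :
    ∀ᵐ t ∂volume.restrict (Ioc a b), t ∈ Ioo a b ∧ P t := by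
  rw [← Measure.restrict_congr_set Ioo_ae_eq_Ioc]
  filter_upwards [ae_restrict_mem measurableSet_Ioo,
    ae_restrict_of_ae_restrict_of_subset (Ioo_subset_Icc_self.trans (Icc_subset_Icc ha hb)) hP]
    with t ht hPt
  exact ⟨ht, hPt⟩

lemma setLIntegral_le_measure_mul_biSup {α : Type*} [MeasurableSpace α] {μ : Measure α}
    {s G : Set α} {f g : α → ℝ≥0∞} (hG : ∀ᵐ t ∂μ.restrict s, t ∈ G) (hfg : ∀ t ∈ G, f t ≤ g t) :
    ∫⁻ t in s, f t ∂μ ≤ μ s * ⨆ t ∈ G, g t := by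
  calc ∫⁻ t in s, f t ∂μ ≤ ∫⁻ _ in s, ⨆ t ∈ G, g t ∂μ := by
        refine lintegral_mono_ae ?_
        filter_upwards [hG] with t ht
        exact (hfg t ht).trans (le_iSup₂_of_le t ht le_rfl)
    _ = μ s * ⨆ t ∈ G, g t := by rw [setLIntegral_const, mul_comm]

theorem lintegral_infDist_gridPoint_le {n : ℕ} {S T : ℝ} (hST : S < T)
    {F : ℝ → Eucl n → Set (Eucl n)} {xbar vbar : ℝ → Eucl n}
    (htraj : ∀ᵐ t ∂(volume.restrict (Icc S T)), vbar t ∈ F t (xbar t)) {δ ε : ℝ} (hδ : 0 ≤ δ)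
    {N : ℕ} (hN : 0 < N) (hmesh : (T - S) / N ≤ ε) :
    ∫⁻ t in Ioc S T, ‖infDist (vbar t) (F (gridPoint S T N t) (xbar t))‖ₑ ≤
      ENNReal.ofReal ((T - S) / N) *
        etaE (fun t x _ => F t x) xbar (univ : Set (Eucl 0)) S δ ε T := by
  set τ := gridNode S T N
  set E := etaE (fun t x _ => F t x) xbar (univ : Set (Eucl 0)) S δ ε T
  set G : ℕ → Set ℝ := fun j => {t ∈ Ioo (τ j) (τ (j + 1)) | vbar t ∈ F t (xbar t)}
  set g : ℕ → ℝ → ℝ≥0∞ := fun j t => infEDist (vbar t) (F (τ j) (xbar t))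
  have hmono := gridNode_strictMono hST hN
  have hGae : ∀ j < N, ∀ᵐ t ∂(volume.restrict (Ioc (τ j) (τ (j + 1)))), t ∈ G j := fun j hj =>
    ae_restrict_Ioc_mem_Ioo_and htraj (gridNode_mem_Icc hST hN (j.le_succ.trans hj)).1
      (gridNode_mem_Icc hST hN hj).2
  have hGne : ∀ j < N, (G j).Nonempty := fun j hj => by
    have : (ae (volume.restrict (Ioc (τ j) (τ (j + 1))))).NeBot := ae_restrict_neBot.2 (by
      simpa [Real.volume_Ioc] using hmono j.lt_succ_self)
    exact (hGae j hj).exists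
  have hcellInt : ∀ j < N, ∫⁻ t in Ioc (τ j) (τ (j + 1)),
      ‖infDist (vbar t) (F (gridPoint S T N t) (xbar t))‖ₑ ≤
        ENNReal.ofReal ((T - S) / N) * ⨆ t ∈ G j, g j t := fun j hj => by
    refine (setLIntegral_le_measure_mul_biSup (g := g j) (hGae j hj) fun t ht => ?_).trans_eq ?_
    · rw [gridPoint_eq_gridNode hST hN hj (Ioo_subset_Ico_self ht.1),
        Real.enorm_of_nonneg infDist_nonneg]
      exact ENNReal.ofReal_toReal_le
    · rw [Real.volume_Ioc, show τ (j + 1) = τ j + (T - S) / N from gridNode_succ j,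
        add_sub_cancel_left]
  have hsum : ∑ j ∈ range N, ⨆ t ∈ G j, g j t ≤ E :=
    ENNReal.sum_biSup_le_of_forall_sum_le (fun j hj => hGne j (Finset.mem_range.1 hj)) fun c hc =>
      sum_infEDist_le_etaE (F := fun t x _ => F t x) (v := fun j => vbar (c j))
        (isPartition_gridNode hST hN) (meshLE_gridNode hmesh) hδ
        (fun j hj => (hc j (Finset.mem_range.2 hj)).1) (Set.mem_univ 0)
        (fun j hj => (hc j (Finset.mem_range.2 hj)).2)
  have hsplit := lintegral_Ioc_eq_sum_of_monotone
    (f := fun t => ‖infDist (vbar t) (F (gridPoint S T N t) (xbar t))‖ₑ) hmono.monotone N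
  rw [gridNode_zero, gridNode_self hN] at hsplit
  calc _ = _ := hsplit
    _ ≤ ∑ j ∈ range N, ENNReal.ofReal ((T - S) / N) * ⨆ t ∈ G j, g j t :=
      sum_le_sum fun j hj => hcellInt j (Finset.mem_range.1 hj)
    _ ≤ ENNReal.ofReal ((T - S) / N) * E := by
      rw [← mul_sum]
      gcongr

theorem stmt17_general {n : ℕ} (S T : ℝ) (hST : S < T)
    (F : ℝ → Eucl n → Set (Eucl n))
    (xbar vbar : ℝ → Eucl n)
    (htraj : ∀ᵐ t ∂(volume.restrict (Icc S T)), vbar t ∈ F t (xbar t))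
    (δ ε : ℝ) (hδ : 0 < δ)
    (hfin : etaE (fun t x _ => F t x) xbar (Set.univ : Set (Eucl 0)) S δ ε T < ⊤)
    (N : ℕ) (hN : 0 < N) (hmesh : (T - S) / N ≤ ε) :
    (∫ t in S..T, infDist (vbar t) (F (gridPoint S T N t) (xbar t))) ≤
      ((T - S) / N) *
        (etaE (fun t x _ => F t x) xbar (Set.univ : Set (Eucl 0)) S δ ε T
          - etaE (fun t x _ => F t x) xbar (Set.univ : Set (Eucl 0)) S δ ε S).toReal := by
  rw [etaE_self, tsub_zero, intervalIntegral.integral_of_le hST.le]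
  have hbound := (enorm_integral_le_lintegral_enorm _).trans
    (lintegral_infDist_gridPoint_le hST htraj hδ.le hN hmesh)
  have hne : ENNReal.ofReal ((T - S) / N) * etaE (fun t x _ => F t x) xbar univ S δ ε T ≠ ⊤ :=
    ENNReal.mul_ne_top ENNReal.ofReal_ne_top hfin.ne
  calc _ ≤ ‖∫ t in Ioc S T, infDist (vbar t) (F (gridPoint S T N t) (xbar t))‖ :=
        Real.le_norm_self _
    _ ≤ _ := by
      rw [← toReal_enorm]
      refine (ENNReal.toReal_mono hne hbound).trans_eq ?_
      rw [ENNReal.toReal_mul,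
        ENNReal.toReal_ofReal (div_nonneg (sub_pos.2 hST).le (Nat.cast_nonneg N))]

/-- For an `F`-trajectory `x̄` (with integrable derivative `v̄`) and
the time-discretized multifunction `F_N(t,x) = F(t_j,x)` on `[t_j,t_{j+1})` built from
the uniform partition of `[S,T]` into `N` pieces with `(T-S)/N ≤ ε`,
`∫_S^T dist(ẋ̄(t), F_N(t,x̄(t))) dt ≤ ((T-S)/N)(η^δ_ε(T) − η^δ_ε(S))`.
(`F` is parameter-free; it is encoded with the trivial parameter set `univ ⊆ ℝ⁰`.) -/
theorem stmt17 {n : ℕ} (S T : ℝ) (hST : S < T)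
    (F : ℝ → Eucl n → Set (Eucl n))
    (hFval : ∀ t x, (F t x).Nonempty ∧ IsClosed (F t x))
    (xbar vbar : ℝ → Eucl n)
    (hvint : IntegrableOn vbar (Icc S T))
    (hxbar : ∀ t ∈ Icc S T, xbar t = xbar S + ∫ s in S..t, vbar s)
    (htraj : ∀ᵐ t ∂(volume.restrict (Icc S T)), vbar t ∈ F t (xbar t))
    (δ ε : ℝ) (hδ : 0 < δ) (hε : 0 < ε)
    (hfin : etaE (fun t x _ => F t x) xbar (Set.univ : Set (Eucl 0)) S δ ε T < ⊤)
    (N : ℕ) (hN : 0 < N) (hmesh : (T - S) / N ≤ ε) :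
    (∫ t in S..T, infDist (vbar t) (F (gridPoint S T N t) (xbar t))) ≤
      ((T - S) / N) *
        (etaE (fun t x _ => F t x) xbar (Set.univ : Set (Eucl 0)) S δ ε T
          - etaE (fun t x _ => F t x) xbar (Set.univ : Set (Eucl 0)) S δ ε S).toReal :=
  stmt17_general S T hST F xbar vbar htraj δ ε hδ hfin N hN hmesh
end
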